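/- arXiv:1406.7590 — 2 statements merged into one kernel-verified Lean document; each statement's English description precedes it below -/
import Mathlib

section
/- Let S be a polynomial ring over a field of characteristic p > 0 and let F^e: S → S be the e-th iterate of the Frobenius endomorphism, s ↦ s^{p^e}. Then the e-th Frobenius (Peskine–Szpiro) functor 𝔉^e(M) = S^{(e)} ⊗_S M is an exact functor on the category of S-modules. -/
open TensorProduct

namespace FrobExactAux

theorem curry_single' {α β M : Type*} [AddCommMonoid M] (a : α) (b : β) (m : M) :
    Finsupp.finsuppProdLEquiv ℕ (M := M) (Finsupp.single (a, b) m)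
      = Finsupp.single a (Finsupp.single b m) := by
  classical
  ext x y
  show Finsupp.curryLinearEquiv ℕ (Finsupp.single (a, b) m) x y = _
  rw [Finsupp.curryLinearEquiv_apply, Finsupp.curry_apply]
  by_cases h1 : a = x
  · subst h1
    by_cases h2 : b = y
    · subst h2; simp
    · simp [Finsupp.single_apply, h2]
  · simp [Finsupp.single_apply, h1, Prod.ext_iff]

theorem uncurry_single' {α β M : Type*} [AddCommMonoid M] (a : α) (b : β) (m : M) :
    (Finsupp.finsuppProdLEquiv ℕ (M := M)).symm (Finsupp.single a (Finsupp.single b m))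
      = Finsupp.single (a, b) m := by
  rw [LinearEquiv.symm_apply_eq, curry_single']

instance neZeroPow (p e : ℕ) [Fact p.Prime] : NeZero (p ^ e) :=
  ⟨pow_ne_zero e (Nat.Prime.ne_zero Fact.out)⟩

/-- divmod decomposition of exponents -/
noncomputable def dmEquiv (σ : Type) (p e : ℕ) [Fact p.Prime] :
    ((σ →₀ ℕ) × (σ →₀ Fin (p ^ e))) ≃ (σ →₀ ℕ) where
  toFun x := p ^ e • x.1 + x.2.mapRange Fin.val rfl
  invFun β :=
    (β.mapRange (· / p ^ e) (Nat.zero_div _),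
     β.mapRange (fun n => ⟨n % p ^ e, Nat.mod_lt _ (Nat.pos_of_ne_zero (NeZero.ne _))⟩)
       (by ext; simp))
  left_inv x := by
    obtain ⟨γ, α⟩ := x
    have hq : 0 < p ^ e := Nat.pos_of_ne_zero (NeZero.ne _)
    refine Prod.ext ?_ ?_
    · ext i
      simp only [Finsupp.mapRange_apply, Finsupp.add_apply, Finsupp.smul_apply, smul_eq_mul]
      rw [Nat.mul_add_div hq]; show γ i + (α i : ℕ) / p ^ e = γ i; rw [Nat.div_eq_of_lt (α i).isLt, add_zero]
    · ext i
      simp only [Finsupp.mapRange_apply, Finsupp.add_apply, Finsupp.smul_apply, smul_eq_mul]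
      rw [Nat.mul_add_mod]; show (α i : ℕ) % p ^ e = _; rw [Nat.mod_eq_of_lt (α i).isLt]
  right_inv β := by
    ext i
    simp only [Finsupp.add_apply, Finsupp.smul_apply, Finsupp.mapRange_apply, smul_eq_mul]
    exact Nat.div_add_mod _ _

/-- `K` as a module over itself via the `e`-th iterate of Frobenius. -/
def Ke (K : Type) (_p _e : ℕ) : Type := K

section Ke

variable (K : Type) [Field K] (p : ℕ) [Fact p.Prime] [CharP K p] (e : ℕ)

instance : AddCommGroup (Ke K p e) := inferInstanceAs (AddCommGroup K)

noncomputable instance : Module K (Ke K p e) :=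
  Module.compHom K (iterateFrobenius K p e)

def Ke.out : Ke K p e → K := id

def Ke.addEquiv : Ke K p e ≃+ K := AddEquiv.refl K

theorem Ke.addEquiv_apply (x : Ke K p e) : Ke.addEquiv K p e x = Ke.out K p e x := rfl

theorem Ke.out_smul (c : K) (x : Ke K p e) :
    Ke.out K p e (c • x) = c ^ p ^ e * Ke.out K p e x := rfl

end Ke

/-- `MvPolynomial σ K` as a module over itself via the `e`-th iterate of Frobenius. -/
def Re (K σ : Type) [CommSemiring K] (_p _e : ℕ) : Type := MvPolynomial σ K

section Re

variable (K σ : Type) [Field K] (p : ℕ) [Fact p.Prime] [CharP K p] (e : ℕ)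

noncomputable instance : AddCommGroup (Re K σ p e) :=
  inferInstanceAs (AddCommGroup (MvPolynomial σ K))

noncomputable instance : Module (MvPolynomial σ K) (Re K σ p e) :=
  Module.compHom (MvPolynomial σ K) (iterateFrobenius (MvPolynomial σ K) p e)

def Re.out : Re K σ p e → MvPolynomial σ K := id
def Re.of : MvPolynomial σ K → Re K σ p e := id

theorem Re.out_smul (s : MvPolynomial σ K) (x : Re K σ p e) :
    Re.out K σ p e (s • x) = s ^ p ^ e * Re.out K σ p e x := rfl

theorem Re.out_add (x y : Re K σ p e) :
    Re.out K σ p e (x + y) = Re.out K σ p e x + Re.out K σ p e y := rfl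

theorem Re.out_injective : Function.Injective (Re.out K σ p e) := fun _ _ h => h

-- basis data
noncomputable def ιB : Type := ↥(Module.Basis.ofVectorSpaceIndex K (Ke K p e))

noncomputable def bK : Module.Basis (ιB K p e) K (Ke K p e) := Module.Basis.ofVectorSpace K (Ke K p e)

noncomputable def vB : ((σ →₀ Fin (p ^ e)) × ιB K p e) → Re K σ p e := fun j =>
  Re.of K σ p e (MvPolynomial.monomial (j.1.mapRange Fin.val rfl) (Ke.out K p e (bK K p e j.2)))

noncomputable def LB :
    (((σ →₀ Fin (p ^ e)) × ιB K p e) →₀ MvPolynomial σ K) →ₗ[MvPolynomial σ K] Re K σ p e :=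
  Finsupp.linearCombination _ (vB K σ p e)

noncomputable def ψK : (ιB K p e →₀ K) ≃+ K :=
  (bK K p e).repr.symm.toAddEquiv.trans (Ke.addEquiv K p e)

noncomputable def c0 : MvPolynomial σ K ≃+ ((σ →₀ ℕ) →₀ K) := AddMonoidAlgebra.coeffAddEquiv

noncomputable def hEquiv :
    ((((σ →₀ Fin (p ^ e)) × ιB K p e)) × (σ →₀ ℕ)) ≃ ((σ →₀ ℕ) × ιB K p e) :=
  (Equiv.prodComm _ _).trans (((Equiv.prodAssoc _ _ _).symm).trans
    ((dmEquiv σ p e).prodCongr (Equiv.refl (ιB K p e))))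

theorem hEquiv_apply (α : σ →₀ Fin (p ^ e)) (i : ιB K p e) (γ : σ →₀ ℕ) :
    hEquiv K σ p e ((α, i), γ) = (p ^ e • γ + α.mapRange Fin.val rfl, i) := rfl

noncomputable def EB :
    (((σ →₀ Fin (p ^ e)) × ιB K p e) →₀ MvPolynomial σ K) ≃+ MvPolynomial σ K :=
  (Finsupp.mapRange.addEquiv (c0 K σ)).trans <|
  ((Finsupp.finsuppProdLEquiv ℕ (M := K)).symm.toAddEquiv).trans <|
  (Finsupp.domCongr (hEquiv K σ p e)).trans <|
  ((Finsupp.finsuppProdLEquiv ℕ (M := K)).toAddEquiv).trans <|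
  (Finsupp.mapRange.addEquiv (ψK K p e)).trans (c0 K σ).symm

theorem c0_monomial (γ : σ →₀ ℕ) (c : K) :
    c0 K σ (MvPolynomial.monomial γ c) = Finsupp.single γ c :=
  by rw [← MvPolynomial.single_eq_monomial]; rfl

theorem c0_symm_single (γ : σ →₀ ℕ) (c : K) :
    (c0 K σ).symm (Finsupp.single γ c) = MvPolynomial.monomial γ c :=
  by rw [← MvPolynomial.single_eq_monomial]; rfl

theorem ψK_single (i : ιB K p e) (c : K) :
    ψK K p e (Finsupp.single i c) = c ^ p ^ e * Ke.out K p e (bK K p e i) := by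
  rw [ψK, AddEquiv.trans_apply]
  erw [Module.Basis.repr_symm_single]
  rw [Ke.addEquiv_apply, Ke.out_smul]

theorem EB_single (α : σ →₀ Fin (p ^ e)) (i : ιB K p e) (γ : σ →₀ ℕ) (c : K) :
    EB K σ p e (Finsupp.single (α, i) (MvPolynomial.monomial γ c))
      = MvPolynomial.monomial (p ^ e • γ + α.mapRange Fin.val rfl)
          (c ^ p ^ e * Ke.out K p e (bK K p e i)) := by
  rw [EB]
  simp only [AddEquiv.trans_apply]
  rw [show (Finsupp.mapRange.addEquiv (c0 K σ)) (Finsupp.single (α, i) (MvPolynomial.monomial γ c))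
      = Finsupp.single (α, i) (Finsupp.single γ c) by
    show Finsupp.mapRange (c0 K σ) (map_zero _) _ = _; rw [Finsupp.mapRange_single, c0_monomial]]
  erw [uncurry_single']
  rw [Finsupp.domCongr_apply, Finsupp.equivMapDomain_single, hEquiv_apply]
  erw [curry_single']
  rw [show (Finsupp.mapRange.addEquiv (ψK K p e))
        (Finsupp.single (p ^ e • γ + α.mapRange Fin.val rfl) (Finsupp.single i c))
      = Finsupp.single (p ^ e • γ + α.mapRange Fin.val rfl)
          (c ^ p ^ e * Ke.out K p e (bK K p e i)) by
    show Finsupp.mapRange (ψK K p e) (map_zero _) _ = _; rw [Finsupp.mapRange_single, ψK_single]]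
  rw [c0_symm_single]

theorem LB_single (α : σ →₀ Fin (p ^ e)) (i : ιB K p e) (t : MvPolynomial σ K) :
    Re.out K σ p e (LB K σ p e (Finsupp.single (α, i) t))
      = t ^ p ^ e * MvPolynomial.monomial (α.mapRange Fin.val rfl) (Ke.out K p e (bK K p e i)) := by
  rw [LB, Finsupp.linearCombination_single, Re.out_smul]
  rfl

theorem key : ∀ x, Re.out K σ p e (LB K σ p e x) = EB K σ p e x := by
  intro x
  induction x using Finsupp.induction_linear with
  | zero => rw [map_zero, map_zero]; rfl
  | add f g hf hg => rw [map_add, map_add, Re.out_add, hf, hg]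
  | single j t =>
    obtain ⟨α, i⟩ := j
    induction t using MvPolynomial.induction_on' with
    | monomial γ c =>
      rw [LB_single, EB_single, MvPolynomial.monomial_pow, MvPolynomial.monomial_mul]
    | add t1 t2 h1 h2 =>
      rw [Finsupp.single_add, map_add, map_add, Re.out_add, h1, h2]

theorem free_Re : Module.Free (MvPolynomial σ K) (Re K σ p e) := by
  have hinj : Function.Injective (LB K σ p e) := by
    intro a b h
    apply (EB K σ p e).injective
    rw [← key, ← key, h]
  have hsurj : Function.Surjective (LB K σ p e) := by
    intro y
    obtain ⟨x, hx⟩ := (EB K σ p e).surjective (Re.out K σ p e y)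
    exact ⟨x, Re.out_injective K σ p e ((key K σ p e x).trans hx)⟩
  exact Module.Free.of_equiv (LinearEquiv.ofBijective (LB K σ p e) ⟨hinj, hsurj⟩)

end Re

end FrobExactAux


/-- The `e`-th Frobenius (Peskine–Szpiro) functor `𝔉^e(M) = S^{(e)} ⊗_S M` on modules over a
polynomial ring `S` over a field of characteristic `p > 0` is exact.  Here `S^{(e)}` is `S`
with `S`-module structure via `s · s' = s^{p^e} s'`, encoded by an additive isomorphism
`ψ : Se ≃+ S` with `ψ (s • x) = s^{p^e} * ψ x`. -/
theorem frobeniusFunctor_exact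
    {K σ : Type} [Field K] (p : ℕ) [Fact p.Prime] [CharP K p] (e : ℕ)
    (Se : Type) [AddCommGroup Se] [Module (MvPolynomial σ K) Se]
    (ψ : Se ≃+ MvPolynomial σ K)
    (hψ : ∀ (s : MvPolynomial σ K) (x : Se), ψ (s • x) = s ^ p ^ e * ψ x)
    (M N P : Type) [AddCommGroup M] [AddCommGroup N] [AddCommGroup P]
    [Module (MvPolynomial σ K) M] [Module (MvPolynomial σ K) N] [Module (MvPolynomial σ K) P]
    (f : M →ₗ[MvPolynomial σ K] N) (g : N →ₗ[MvPolynomial σ K] P)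
    (hf : Function.Injective f) (hfg : Function.Exact f g) (hg : Function.Surjective g) :
    Function.Injective (LinearMap.lTensor Se f) ∧
      Function.Exact (LinearMap.lTensor Se f) (LinearMap.lTensor Se g) ∧
      Function.Surjective (LinearMap.lTensor Se g) := by
  haveI : Module.Free (MvPolynomial σ K) (FrobExactAux.Re K σ p e) := FrobExactAux.free_Re K σ p e
  let eqv : Se ≃ₗ[MvPolynomial σ K] FrobExactAux.Re K σ p e :=
    { toFun := fun x => FrobExactAux.Re.of K σ p e (ψ x)
      invFun := fun y => ψ.symm (FrobExactAux.Re.out K σ p e y)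
      left_inv := fun x => ψ.symm_apply_apply x
      right_inv := fun y => ψ.apply_symm_apply y
      map_add' := fun x y => by show FrobExactAux.Re.of K σ p e (ψ (x + y)) = _; rw [map_add]; rfl
      map_smul' := fun s x => by
        apply FrobExactAux.Re.out_injective K σ p e
        rw [FrobExactAux.Re.out_smul]
        exact hψ s x }
  haveI : Module.Flat (MvPolynomial σ K) Se :=
    Module.Flat.of_linearEquiv eqv
  exact ⟨Module.Flat.lTensor_preserves_injective_linearMap f hf,
    lTensor_exact Se hfg hg, LinearMap.lTensor_surjective Se hg⟩
end

section
/- Let R = K⟦x₁,…,x_n⟧ over a field K, S = R⟦x_{n+1}⟧, and G(M) = M ⊗_R (S_{x_{n+1}}/S). Then for every R-module M, Ass_S G(M) = {(P, x_{n+1})S : P ∈ Ass_R M}, i.e., the associated primes of G(M) over S are exactly the primes generated by an associated prime of M over R together with x_{n+1}. -/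
set_option synthInstance.maxHeartbeats 1000000
set_option maxHeartbeats 1000000

open TensorProduct PowerSeries

noncomputable section KashAux

variable {R : Type} [CommRing R]

/-- Abbreviation for the localization of `R⟦X⟧` away from `X`. -/
abbrev LL (R : Type) [CommRing R] := Localization.Away (X : PowerSeries R)

/-- The element `X^k` of the powers submonoid. -/
def Xp (R : Type) [CommRing R] (k : ℕ) : Submonoid.powers (X : PowerSeries R) :=
  ⟨(X : PowerSeries R) ^ k, k, rfl⟩

lemma X_mem_nzd : (X : R⟦X⟧) ∈ nonZeroDivisors R⟦X⟧ := by
  rw [mem_nonZeroDivisors_iff_right]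
  intro g h
  ext n
  have := congrArg (PowerSeries.coeff (n + 1)) h
  rw [mul_comm, coeff_succ_X_mul] at this
  simpa using this

lemma algebraMap_L_injective : Function.Injective (algebraMap R⟦X⟧ (LL R)) :=
  IsLocalization.injective (LL R) (Submonoid.powers_le.2 X_mem_nzd)

lemma mk_Xp_succ_smul (a : R⟦X⟧) (k : ℕ) :
    (X : R⟦X⟧) • (Localization.mk a (Xp R (k + 1)) : LL R) = Localization.mk a (Xp R k) := by
  rw [Algebra.smul_def, ← Localization.mk_one_eq_algebraMap, Localization.mk_mul,
    Localization.mk_eq_mk_iff]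
  apply Localization.r_of_eq
  simp only [Xp, Submonoid.mk_mul_mk, one_mul]
  ring

lemma mk_X_pow_mul (f : R⟦X⟧) (k : ℕ) :
    (Localization.mk ((X : R⟦X⟧) ^ k * f) (Xp R k) : LL R) = algebraMap R⟦X⟧ (LL R) f := by
  rw [← Localization.mk_one_eq_algebraMap, Localization.mk_eq_mk_iff]
  apply Localization.r_of_eq
  simp only [Xp, OneMemClass.coe_one, one_mul]

lemma pow_smul_mk (a : R⟦X⟧) (k N : ℕ) (h : k + 1 ≤ N) :
    (X : R⟦X⟧) ^ N • (Localization.mk a (Xp R (k + 1)) : LL R)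
      = algebraMap R⟦X⟧ (LL R) ((X : R⟦X⟧) ^ (N - (k + 1)) * a) := by
  rw [Algebra.smul_def, ← Localization.mk_one_eq_algebraMap, ← Localization.mk_one_eq_algebraMap,
    Localization.mk_mul, Localization.mk_eq_mk_iff]
  apply Localization.r_of_eq
  simp only [Xp, Submonoid.mk_mul_mk, one_mul, OneMemClass.coe_one]
  rw [← mul_assoc, ← pow_add]
  congr 2
  omega

variable {Q : Type} [AddCommGroup Q] [Module (PowerSeries R) Q] [Module R Q]
  [IsScalarTower R (PowerSeries R) Q]

/-- The images of the negative powers of `X` in `Q`. -/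
def e (π : LL R →ₗ[PowerSeries R] Q) (k : ℕ) : Q :=
  π (Localization.mk 1 (Xp R (k + 1)))

variable (π : LL R →ₗ[PowerSeries R] Q)

lemma pi_algebraMap
    (hker : LinearMap.ker π = LinearMap.range (Algebra.linearMap (PowerSeries R) (LL R)))
    (f : R⟦X⟧) : π (algebraMap R⟦X⟧ (LL R) f) = 0 := by
  have : algebraMap R⟦X⟧ (LL R) f ∈ LinearMap.ker π := by
    rw [hker]; exact ⟨f, rfl⟩
  exact this

lemma X_smul_e_zero
    (hker : LinearMap.ker π = LinearMap.range (Algebra.linearMap (PowerSeries R) (LL R))) :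
    (X : R⟦X⟧) • e π 0 = 0 := by
  unfold e
  rw [← map_smul, mk_Xp_succ_smul]
  have h1 : (Localization.mk 1 (Xp R 0) : LL R) = algebraMap R⟦X⟧ (LL R) 1 := by
    simpa using mk_X_pow_mul (R := R) 1 0
  rw [h1, pi_algebraMap π hker]

lemma X_smul_e_succ (k : ℕ) : (X : R⟦X⟧) • e π (k + 1) = e π k := by
  unfold e
  rw [← map_smul, mk_Xp_succ_smul]

lemma smul_e (r : R) (k : ℕ) :
    r • e π k = π (Localization.mk (C r) (Xp R (k + 1))) := by
  unfold e
  rw [← algebraMap_smul (PowerSeries R) r, ← map_smul]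
  congr 1
  rw [Algebra.smul_def, ← Localization.mk_one_eq_algebraMap, Localization.mk_mul,
    Localization.mk_eq_mk_iff]
  apply Localization.r_of_eq
  simp [Xp, C_eq_algebraMap, mul_comm]

/-- The map sending a finitely supported sequence `(a_k)` to `∑ a_k x^{-(k+1)}` in `Q`. -/
def bmap : (ℕ →₀ R) →ₗ[R] Q := Finsupp.linearCombination R (e π)

lemma bmap_surjective (hπ : Function.Surjective π)
    (hker : LinearMap.ker π = LinearMap.range (Algebra.linearMap (PowerSeries R) (LL R))) :
    Function.Surjective (bmap π) := by
  have key : ∀ (N : ℕ) (f : R⟦X⟧), ∃ g : ℕ →₀ R,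
      bmap π g = π (Localization.mk f (Xp R N)) := by
    intro N
    induction N with
    | zero =>
      intro f
      refine ⟨0, ?_⟩
      have h1 : (Localization.mk f (Xp R 0) : LL R) = algebraMap R⟦X⟧ (LL R) f := by
        simpa using mk_X_pow_mul (R := R) f 0
      rw [h1, pi_algebraMap π hker, map_zero]
    | succ N ih =>
      intro f
      set a₀ := constantCoeff f with ha₀
      have hdvd : (X : R⟦X⟧) ∣ f - C a₀ := by
        rw [PowerSeries.X_dvd_iff]
        simp [ha₀]
      obtain ⟨t, ht⟩ := hdvd
      obtain ⟨g, hg⟩ := ih t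
      refine ⟨Finsupp.single N a₀ + g, ?_⟩
      have hf : f = C a₀ + X * t := by rw [← ht]; ring
      have hsplit : (Localization.mk f (Xp R (N + 1)) : LL R)
          = Localization.mk (C a₀) (Xp R (N + 1)) + Localization.mk (X * t) (Xp R (N + 1)) := by
        rw [Localization.add_mk_self, ← hf]
      have hXt : (Localization.mk ((X : R⟦X⟧) * t) (Xp R (N + 1)) : LL R)
          = Localization.mk t (Xp R N) := by
        rw [Localization.mk_eq_mk_iff]
        apply Localization.r_of_eq
        simp only [Xp]
        ring
      rw [hsplit, hXt, map_add, map_add, ← smul_e, hg]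
      simp only [bmap, Finsupp.linearCombination_single]

  intro q
  obtain ⟨l, rfl⟩ := hπ q
  induction l using Localization.induction_on with
  | H p =>
    obtain ⟨f, d⟩ := p
    obtain ⟨N, hN⟩ := d.2
    have hd : d = Xp R N := Subtype.ext hN.symm
    rw [hd]
    exact key N f

lemma bmap_injective
    (hker : LinearMap.ker π = LinearMap.range (Algebra.linearMap (PowerSeries R) (LL R))) :
    Function.Injective (bmap π) := by
  rw [injective_iff_map_eq_zero]
  intro f hf
  set N := f.support.sup id + 1 with hN
  have hsupN : ∀ k ∈ f.support, k + 1 ≤ N := fun k hk => by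
    have : k ≤ f.support.sup id := Finset.le_sup (f := id) hk
    omega
  have hπl : π (∑ k ∈ f.support, Localization.mk (C (f k)) (Xp R (k + 1))) = 0 := by
    rw [map_sum]
    calc ∑ k ∈ f.support, π (Localization.mk (C (f k)) (Xp R (k + 1)))
        = ∑ k ∈ f.support, f k • e π k :=
          Finset.sum_congr rfl fun k _ => (smul_e π (f k) k).symm
      _ = bmap π f := by rw [bmap, Finsupp.linearCombination_apply, Finsupp.sum]
      _ = 0 := hf
  have hmem : (∑ k ∈ f.support, Localization.mk (C (f k)) (Xp R (k + 1)))
      ∈ LinearMap.range (Algebra.linearMap (PowerSeries R) (LL R)) := by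
    rw [← hker]; exact hπl
  obtain ⟨s, hs⟩ := hmem
  have hXN : algebraMap R⟦X⟧ (LL R) (∑ k ∈ f.support, (X : R⟦X⟧) ^ (N - (k + 1)) * C (f k))
      = algebraMap R⟦X⟧ (LL R) ((X : R⟦X⟧) ^ N * s) := by
    rw [map_sum, map_mul]
    calc ∑ k ∈ f.support, algebraMap R⟦X⟧ (LL R) ((X : R⟦X⟧) ^ (N - (k + 1)) * C (f k))
        = ∑ k ∈ f.support, (X : R⟦X⟧) ^ N • Localization.mk (C (f k)) (Xp R (k + 1)) :=
          Finset.sum_congr rfl fun k hk => (pow_smul_mk _ _ _ (hsupN k hk)).symm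
      _ = (X : R⟦X⟧) ^ N • (∑ k ∈ f.support, Localization.mk (C (f k)) (Xp R (k + 1))) :=
          (Finset.smul_sum).symm
      _ = (X : R⟦X⟧) ^ N • (Algebra.linearMap (PowerSeries R) (LL R) s) := by rw [hs]
      _ = algebraMap R⟦X⟧ (LL R) ((X : R⟦X⟧) ^ N) * algebraMap R⟦X⟧ (LL R) s := by
          rw [Algebra.smul_def]; rfl
  have hE : (∑ k ∈ f.support, (X : R⟦X⟧) ^ (N - (k + 1)) * C (f k)) = (X : R⟦X⟧) ^ N * s :=
    algebraMap_L_injective hXN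
  ext j
  by_cases hj : j ∈ f.support
  · have hcoeff := congrArg (PowerSeries.coeff (N - (j + 1))) hE
    rw [map_sum] at hcoeff
    have hLHS : ∀ k ∈ f.support,
        PowerSeries.coeff (N - (j + 1)) ((X : R⟦X⟧) ^ (N - (k + 1)) * C (f k))
          = if k = j then f j else 0 := by
      intro k hk
      rw [mul_comm, coeff_C_mul_X_pow]
      have h1 := hsupN k hk
      have h2 := hsupN j hj
      by_cases hkj : k = j
      · subst hkj; simp
      · rw [if_neg hkj, if_neg (by omega)]
    rw [Finset.sum_congr rfl hLHS, Finset.sum_ite_eq' f.support j (fun _ => f j), if_pos hj]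
      at hcoeff
    have hRHS : PowerSeries.coeff (N - (j + 1)) ((X : R⟦X⟧) ^ N * s) = 0 := by
      have hdvd : (X : R⟦X⟧) ^ N ∣ (X : R⟦X⟧) ^ N * s := dvd_mul_right _ _
      exact PowerSeries.X_pow_dvd_iff.1 hdvd _ (by have := hsupN j hj; omega)
    rw [hRHS] at hcoeff
    simpa using hcoeff
  · simpa using Finsupp.notMem_support_iff.1 hj

/-- `Q` is a free `R`-module on the negative powers of `X`. -/
def bequiv (hπ : Function.Surjective π)
    (hker : LinearMap.ker π = LinearMap.range (Algebra.linearMap (PowerSeries R) (LL R))) :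
    (ℕ →₀ R) ≃ₗ[R] Q :=
  LinearEquiv.ofBijective (bmap π) ⟨bmap_injective π hker, bmap_surjective π hπ hker⟩

variable (M : Type) [AddCommGroup M] [Module R M]

/-- The structural isomorphism `(ℕ →₀ M) ≃ Q ⊗[R] M`. -/
def Ψ (hπ : Function.Surjective π)
    (hker : LinearMap.ker π = LinearMap.range (Algebra.linearMap (PowerSeries R) (LL R))) :
    (ℕ →₀ M) ≃ₗ[R] Q ⊗[R] M :=
  (TensorProduct.finsuppScalarLeft R M ℕ).symm ≪≫ₗ
    TensorProduct.congr (bequiv π hπ hker) (LinearEquiv.refl R M)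

variable (hπ : Function.Surjective π)
    (hker : LinearMap.ker π = LinearMap.range (Algebra.linearMap (PowerSeries R) (LL R)))

lemma Ψ_single (k : ℕ) (m : M) :
    Ψ π M hπ hker (Finsupp.single k m) = e π k ⊗ₜ[R] m := by
  rw [Ψ, LinearEquiv.trans_apply, TensorProduct.finsuppScalarLeft_symm_apply_single,
    TensorProduct.congr_tmul]
  congr 1
  show bmap π (Finsupp.single k 1) = e π k
  rw [bmap, Finsupp.linearCombination_single, one_smul]

/-- The shift map on finitely supported sequences. -/
def σ : (ℕ →₀ M) →ₗ[R] (ℕ →₀ M) :=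
  Finsupp.lcomapDomain (· + 1) (add_left_injective 1)

lemma σ_apply (f : ℕ →₀ M) (a : ℕ) : σ (R := R) M f a = f (a + 1) := rfl

lemma σ_single_zero (m : M) : σ (R := R) M (Finsupp.single 0 m) = 0 := by
  ext a
  rw [σ_apply]
  simp

lemma σ_single_succ (k : ℕ) (m : M) :
    σ (R := R) M (Finsupp.single (k + 1) m) = Finsupp.single k m := by
  ext a
  rw [σ_apply]
  simp [Finsupp.single_apply]

lemma X_smul_Ψ (f : ℕ →₀ M) :
    (X : R⟦X⟧) • Ψ π M hπ hker f = Ψ π M hπ hker (σ (R := R) M f) := by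
  induction f using Finsupp.induction with
  | zero => simp
  | single_add k m f _ _ ih =>
    have hsingle : (X : R⟦X⟧) • Ψ π M hπ hker (Finsupp.single k m)
        = Ψ π M hπ hker (σ (R := R) M (Finsupp.single k m)) := by
      cases k with
      | zero =>
        rw [Ψ_single, smul_tmul', X_smul_e_zero π hker, zero_tmul, σ_single_zero, map_zero]
      | succ k =>
        rw [Ψ_single, smul_tmul', X_smul_e_succ, σ_single_succ, Ψ_single]
    rw [map_add, smul_add, ih, hsingle, ← map_add, ← map_add]

lemma pow_smul_bounded (N : ℕ) (f : ℕ →₀ M) (hb : ∀ k ∈ f.support, k < N) :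
    (X : R⟦X⟧) ^ N • Ψ π M hπ hker f = 0 := by
  induction N generalizing f with
  | zero =>
    have : f = 0 := by
      ext a
      by_cases ha : a ∈ f.support
      · exact absurd (hb a ha) (by omega)
      · simpa using Finsupp.notMem_support_iff.1 ha
    rw [this, map_zero, smul_zero]
  | succ N ih =>
    rw [pow_succ, mul_smul, X_smul_Ψ]
    apply ih
    intro k hk
    have : k + 1 ∈ f.support := by
      rw [Finsupp.mem_support_iff] at hk ⊢
      exact hk
    have := hb _ this
    omega

include hπ hker in
lemma exists_pow_smul_eq_zero (z : Q ⊗[R] M) :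
    ∃ N : ℕ, 0 < N ∧ (X : R⟦X⟧) ^ N • z = 0 := by
  set f := (Ψ π M hπ hker).symm z with hf
  refine ⟨f.support.sup id + 1, Nat.succ_pos _, ?_⟩
  have hz : z = Ψ π M hπ hker f := by rw [hf, LinearEquiv.apply_symm_apply]
  rw [hz]
  apply pow_smul_bounded
  intro k hk
  have : k ≤ f.support.sup id := Finset.le_sup (f := id) hk
  omega

include hπ hker in
lemma ker_X_eq (z : Q ⊗[R] M) (h : (X : R⟦X⟧) • z = 0) :
    ∃ m : M, z = e π 0 ⊗ₜ[R] m := by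
  set f := (Ψ π M hπ hker).symm z with hf
  have hz : z = Ψ π M hπ hker f := by rw [hf, LinearEquiv.apply_symm_apply]
  have hσ : σ (R := R) M f = 0 := by
    have h2 : Ψ π M hπ hker (σ (R := R) M f) = 0 := by
      rw [← X_smul_Ψ, ← hz, h]
    exact (map_eq_zero_iff _ (Ψ π M hπ hker).injective).1 h2
  refine ⟨f 0, ?_⟩
  have hf0 : f = Finsupp.single 0 (f 0) := by
    ext a
    cases a with
    | zero => simp
    | succ a =>
      have : f (a + 1) = 0 := by
        have := congrArg (fun g => g a) hσ
        simpa [σ_apply] using this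
      rw [this]
      exact (Finsupp.single_eq_of_ne (by omega)).symm
  rw [hz, hf0, Ψ_single, Finsupp.single_eq_same]

include hπ hker in
lemma e_zero_tmul_eq_zero_iff (m : M) :
    e π 0 ⊗ₜ[R] m = (0 : Q ⊗[R] M) ↔ m = 0 := by
  rw [← Ψ_single π M hπ hker 0 m, map_eq_zero_iff _ (Ψ π M hπ hker).injective,
    Finsupp.single_eq_zero]

include hπ hker in
lemma smul_e_zero_tmul (s : R⟦X⟧) (m : M) :
    s • (e π 0 ⊗ₜ[R] m) = e π 0 ⊗ₜ[R] (constantCoeff s • m) := by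
  have hdvd : (X : R⟦X⟧) ∣ s - C (constantCoeff s) := by
    rw [PowerSeries.X_dvd_iff]
    simp
  obtain ⟨t, ht⟩ := hdvd
  have hs : s = C (constantCoeff s) + X * t := by rw [← ht]; ring
  have h1 : (C (constantCoeff s) : R⟦X⟧) • (e π 0 ⊗ₜ[R] m)
      = e π 0 ⊗ₜ[R] (constantCoeff s • m) := by
    rw [C_eq_algebraMap, algebraMap_smul, ← TensorProduct.tmul_smul]
  have h2 : ((X : R⟦X⟧) * t) • (e π 0 ⊗ₜ[R] m) = 0 := by
    rw [mul_comm, mul_smul, smul_tmul', X_smul_e_zero π hker, zero_tmul, smul_zero]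
  nth_rewrite 1 [hs]
  rw [add_smul, h1, h2, add_zero]

lemma comap_constantCoeff_eq (P : Ideal R) :
    Ideal.comap (constantCoeff) P
      = Ideal.map (algebraMap R R⟦X⟧) P ⊔ Ideal.span {(X : R⟦X⟧)} := by
  apply le_antisymm
  · intro s hs
    have hs' : constantCoeff s ∈ P := hs
    obtain ⟨t, ht⟩ : (X : R⟦X⟧) ∣ s - C (constantCoeff s) := by
      rw [PowerSeries.X_dvd_iff]; simp
    have hsplit : s = C (constantCoeff s) + X * t := by rw [← ht]; ring
    rw [hsplit]
    refine Ideal.add_mem _ (Ideal.mem_sup_left ?_) (Ideal.mem_sup_right ?_)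
    · rw [C_eq_algebraMap]; exact Ideal.mem_map_of_mem _ hs'
    · exact Ideal.mem_span_singleton.2 (dvd_mul_right _ _)
  · refine sup_le ?_ ?_
    · rw [Ideal.map_le_iff_le_comap]
      intro a ha
      show constantCoeff (algebraMap R R⟦X⟧ a) ∈ P
      rw [← C_eq_algebraMap, constantCoeff_C]
      exact ha
    · rw [Ideal.span_le, Set.singleton_subset_iff]
      show constantCoeff (X : R⟦X⟧) ∈ P
      rw [constantCoeff_X]
      exact P.zero_mem

include hπ hker in
theorem main_generic [IsNoetherianRing R] :
    associatedPrimes R⟦X⟧ (Q ⊗[R] M) =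
      {J | ∃ P ∈ associatedPrimes R M,
        J = Ideal.map (algebraMap R R⟦X⟧) P ⊔ Ideal.span {(X : R⟦X⟧)}} := by
  ext J
  constructor
  · intro hJ
    rw [AssociatedPrimes.mem_iff, isAssociatedPrime_iff] at hJ
    obtain ⟨hJp, z, hz⟩ := hJ
    rw [Submodule.bot_colon'] at hz
    obtain ⟨N, hN0, hNz⟩ := exists_pow_smul_eq_zero π M hπ hker z
    have hXJ : (X : R⟦X⟧) ∈ J := by
      refine (hJp.pow_mem_iff_mem N hN0).1 ?_
      rw [hz, Submodule.mem_annihilator_span_singleton]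
      exact hNz
    have hXz : (X : R⟦X⟧) • z = 0 := by
      rw [hz, Submodule.mem_annihilator_span_singleton] at hXJ
      exact hXJ
    obtain ⟨m, rfl⟩ := ker_X_eq π M hπ hker z hXz
    have hann : ∀ s : R⟦X⟧, s ∈ J ↔ constantCoeff s • m = 0 := by
      intro s
      rw [hz, Submodule.mem_annihilator_span_singleton, smul_e_zero_tmul π M hπ hker,
        e_zero_tmul_eq_zero_iff π M hπ hker]
    refine ⟨(Submodule.span R {m}).annihilator, isAssociatedPrime_iff.2 ⟨?_, m, by rw [Submodule.bot_colon']⟩, ?_⟩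
    · have hPc : (Submodule.span R {m}).annihilator = Ideal.comap (C : R →+* R⟦X⟧) J := by
        ext a
        rw [Submodule.mem_annihilator_span_singleton, Ideal.mem_comap, hann, constantCoeff_C]
      rw [hPc]
      exact Ideal.IsPrime.comap _ (hK := hJp)
    · rw [← comap_constantCoeff_eq]
      ext s
      rw [Ideal.mem_comap, Submodule.mem_annihilator_span_singleton, hann]
  · rintro ⟨P, hP, rfl⟩
    rw [AssociatedPrimes.mem_iff, isAssociatedPrime_iff] at hP
    obtain ⟨hPp, m, rfl⟩ := hP
    rw [Submodule.bot_colon'] at hPp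
    rw [AssociatedPrimes.mem_iff, isAssociatedPrime_iff, Submodule.bot_colon']
    refine ⟨?_, ?_⟩
    · rw [← comap_constantCoeff_eq]
      exact Ideal.IsPrime.comap _ (hK := hPp)
    · refine ⟨e π 0 ⊗ₜ[R] m, ?_⟩
      rw [Submodule.bot_colon', ← comap_constantCoeff_eq]
      ext s
      rw [Ideal.mem_comap, Submodule.mem_annihilator_span_singleton,
        Submodule.mem_annihilator_span_singleton, smul_e_zero_tmul π M hπ hker,
        e_zero_tmul_eq_zero_iff π M hπ hker]

end KashAux

/-- Let `R = K⟦x₁,…,xₙ⟧`, `S = R⟦x⟧`, and `Q = S_x/S`.  For every `R`-module `M`, the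
associated primes of `G(M) = Q ⊗_R M` over `S` are exactly the ideals `(P, x)S` for
`P` an associated prime of `M` over `R`. -/
theorem associatedPrimes_kashiwara
    {K : Type} [Field K] (n : ℕ)
    (Q : Type) [AddCommGroup Q]
    [Module (PowerSeries (MvPowerSeries (Fin n) K)) Q]
    [Module (MvPowerSeries (Fin n) K) Q]
    [IsScalarTower (MvPowerSeries (Fin n) K) (PowerSeries (MvPowerSeries (Fin n) K)) Q]
    (π : Localization.Away (X : PowerSeries (MvPowerSeries (Fin n) K))
      →ₗ[PowerSeries (MvPowerSeries (Fin n) K)] Q)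
    (hπ : Function.Surjective π)
    (hker : LinearMap.ker π = LinearMap.range (Algebra.linearMap
      (PowerSeries (MvPowerSeries (Fin n) K))
      (Localization.Away (X : PowerSeries (MvPowerSeries (Fin n) K)))))
    (M : Type) [AddCommGroup M] [Module (MvPowerSeries (Fin n) K) M] :
    associatedPrimes (PowerSeries (MvPowerSeries (Fin n) K))
        (Q ⊗[MvPowerSeries (Fin n) K] M) =
      {J | ∃ P ∈ associatedPrimes (MvPowerSeries (Fin n) K) M,
        J = Ideal.map (algebraMap (MvPowerSeries (Fin n) K)
              (PowerSeries (MvPowerSeries (Fin n) K))) P ⊔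
            Ideal.span {(X : PowerSeries (MvPowerSeries (Fin n) K))}} := by
  exact main_generic π M hπ hker
end
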